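/- arXiv:1510.08010 — 3 statements merged into one kernel-verified Lean document; each statement's English description precedes it below -/
import Mathlib

section
/- Under the stated hypotheses, for the parallel hybrid algorithm, if a subsequence {x_m} of {x_n} converges weakly to some x̂ ∈ C, then x̂ ∈ VI(A_k, C) for every k = 1,…,M. -/
set_option maxHeartbeats 1000000

open Filter Topology
open scoped RealInnerProductSpace

/-- `p` is the metric projection of `x` onto the set `D`:
it belongs to `D` and minimizes the distance to `x` over `D`. -/
def IsMetricProj {H : Type*} [NormedAddCommGroup H] [InnerProductSpace ℝ H]
    (D : Set H) (x p : H) : Prop :=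
  p ∈ D ∧ ∀ w ∈ D, ‖p - x‖ ≤ ‖w - x‖

lemma small_t_aux {v c : ℝ} (hc : 0 ≤ c)
    (h : ∀ t : ℝ, t ∈ Set.Ioc (0:ℝ) 1 → 0 ≤ v + t * c) : 0 ≤ v := by
  by_contra hv
  push_neg at hv
  have ht0 : (0:ℝ) < min 1 (-v / (2 * (c + 1))) := by
    apply lt_min one_pos
    apply div_pos (by linarith) (by linarith)
  have ht1 : min 1 (-v / (2 * (c + 1))) ≤ 1 := min_le_left _ _
  have := h _ ⟨ht0, ht1⟩
  have h2 : min 1 (-v / (2 * (c + 1))) ≤ -v / (2 * (c + 1)) := min_le_right _ _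
  have hcpos : (0:ℝ) < c + 1 := by linarith
  have hmul : min 1 (-v / (2 * (c + 1))) * c ≤ (-v / (2 * (c + 1))) * c :=
    mul_le_mul_of_nonneg_right h2 hc
  have hfrac : (-v / (2 * (c + 1))) * c ≤ -v / 2 := by
    rw [div_mul_eq_mul_div, div_le_div_iff₀ (by linarith) two_pos]
    nlinarith
  linarith

lemma tendsto_zero_of_sq {t : ℕ → ℝ} (hnn : ∀ n, 0 ≤ t n)
    (h : Filter.Tendsto (fun n => t n ^ 2) Filter.atTop (nhds 0)) :
    Filter.Tendsto t Filter.atTop (nhds 0) := by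
  have := h.sqrt
  rw [Real.sqrt_zero] at this
  convert this using 2 with n
  rw [Real.sqrt_sq (hnn n)]

section proj
variable {H : Type*} [NormedAddCommGroup H] [InnerProductSpace ℝ H]

lemma norm_sub_smul_sq (w e : H) (c : ℝ) :
    ‖w - c • e‖ ^ 2 = ‖w‖ ^ 2 - 2 * c * ⟪e, w⟫ + c ^ 2 * ‖e‖ ^ 2 := by
  rw [norm_sub_sq_real, real_inner_smul_right, norm_smul, real_inner_comm]
  simp [Real.norm_eq_abs, mul_pow, sq_abs]
  ring

lemma proj_char {D : Set H} (hD : Convex ℝ D) {x p : H} (hp : IsMetricProj D x p) :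
    ∀ w ∈ D, ⟪x - p, w - p⟫ ≤ 0 := by
  intro w hw
  have key : ∀ t : ℝ, t ∈ Set.Ioc (0:ℝ) 1 →
      0 ≤ 2 * ⟪p - x, w - p⟫ + t * ‖w - p‖ ^ 2 := by
    intro t ht
    have hmem : p + t • (w - p) ∈ D := by
      have := hD hp.1 hw (by linarith [ht.2] : (0:ℝ) ≤ 1 - t) ht.1.le (by ring)
      convert this using 1
      module
    have h2 := hp.2 _ hmem
    have hexp : ‖p + t • (w - p) - x‖ ^ 2
        = ‖p - x‖ ^ 2 + 2 * t * ⟪p - x, w - p⟫ + t ^ 2 * ‖w - p‖ ^ 2 := by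
      have hre : p + t • (w - p) - x = (p - x) + t • (w - p) := by abel
      rw [hre, norm_add_sq_real, real_inner_smul_right, norm_smul]
      simp [Real.norm_eq_abs, mul_pow, sq_abs]
      ring
    have hsq : ‖p - x‖ ^ 2 ≤ ‖p + t • (w - p) - x‖ ^ 2 :=
      pow_le_pow_left₀ (norm_nonneg _) h2 2
    rw [hexp] at hsq
    have htpos := ht.1
    nlinarith
  have := small_t_aux (by positivity : (0:ℝ) ≤ ‖w - p‖ ^ 2) key
  have hcomm : ⟪x - p, w - p⟫ = - ⟪p - x, w - p⟫ := by
    rw [← inner_neg_left]; congr 1; abel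
  linarith

lemma proj_of_char {D : Set H} {x p : H} (hpD : p ∈ D)
    (h : ∀ w ∈ D, ⟪x - p, w - p⟫ ≤ 0) : IsMetricProj D x p := by
  refine ⟨hpD, fun w hw => ?_⟩
  have hexp : ‖w - x‖ ^ 2 = ‖w - p‖ ^ 2 - 2 * ⟪x - p, w - p⟫ + ‖p - x‖ ^ 2 := by
    have hre : w - x = (w - p) - (x - p) := by abel
    rw [hre, norm_sub_sq_real, real_inner_comm]
    have hn : ‖x - p‖ = ‖p - x‖ := norm_sub_rev _ _
    rw [hn]
  have := h w hw
  nlinarith [norm_nonneg (w - x), norm_nonneg (p - x), norm_nonneg (w - p)]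

lemma proj_firm {D : Set H} (hD : Convex ℝ D) {va vb pa pb : H}
    (hpa : IsMetricProj D va pa) (hpb : IsMetricProj D vb pb) :
    ‖pa - pb‖ ^ 2 ≤ ‖va - vb‖ ^ 2 - ‖(va - vb) - (pa - pb)‖ ^ 2 := by
  have h1 := proj_char hD hpa pb hpb.1
  have h2 := proj_char hD hpb pa hpa.1
  have hsum : ⟪(va - vb) - (pa - pb), pa - pb⟫
      = -⟪va - pa, pb - pa⟫ - ⟪vb - pb, pa - pb⟫ := by
    simp only [inner_sub_left, inner_sub_right]
    ring
  have key : ‖pa - pb‖ ^ 2 ≤ ⟪va - vb, pa - pb⟫ := by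
    have hexp : ⟪(va - vb) - (pa - pb), pa - pb⟫
        = ⟪va - vb, pa - pb⟫ - ‖pa - pb‖ ^ 2 := by
      rw [inner_sub_left, real_inner_self_eq_norm_sq]
    nlinarith [hsum, hexp]
  have hnorm : ‖(va - vb) - (pa - pb)‖ ^ 2
      = ‖va - vb‖ ^ 2 - 2 * ⟪va - vb, pa - pb⟫ + ‖pa - pb‖ ^ 2 :=
    norm_sub_sq_real _ _
  nlinarith

end proj


theorem weak_limits_solve_variational_inequalities
    {H : Type*} [NormedAddCommGroup H] [InnerProductSpace ℝ H] [CompleteSpace H]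
    -- `C` is a nonempty closed convex subset of `H`
    (C : Set H) (hCne : C.Nonempty) (hCcl : IsClosed C) (hCcv : Convex ℝ C)
    (K M N : ℕ)
    -- the bifunctions `f_l : C × C → ℝ` satisfy conditions (A1)-(A4)
    (f : Fin K → H → H → ℝ)
    (hfA1 : ∀ l, ∀ p ∈ C, f l p p = 0)
    (hfA2 : ∀ l, ∀ p ∈ C, ∀ q ∈ C, f l p q + f l q p ≤ 0)
    (hfA3 : ∀ l, ∀ p ∈ C, ∀ q ∈ C, ∀ w ∈ C,
      Filter.limsup (fun t : ℝ => f l (t • w + (1 - t) • p) q)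
        (nhdsWithin 0 (Set.Ioi 0)) ≤ f l p q)
    (hfA4cv : ∀ l, ∀ p ∈ C, ConvexOn ℝ C (f l p))
    (hfA4lsc : ∀ l, ∀ p ∈ C, LowerSemicontinuousOn (f l p) C)
    -- the mappings `A_k : C → H` are `α`-inverse strongly monotone
    (α : ℝ) (hα : 0 < α) (A : Fin M → H → H)
    (hA : ∀ k, ∀ p ∈ C, ∀ q ∈ C, α * ‖A k p - A k q‖ ^ 2 ≤ ⟪A k p - A k q, p - q⟫)
    -- the mappings `S_i : C → C` are nonexpansive
    (S : Fin N → H → H) (hSmap : ∀ i, ∀ p ∈ C, S i p ∈ C)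
    (hS : ∀ i, ∀ p ∈ C, ∀ q ∈ C, ‖S i p - S i q‖ ≤ ‖p - q‖)
    -- parameters: `λ ∈ (0, 2α)`, `{α_n} ⊂ [0,1]`, `{r_n} ⊂ [d, ∞)`, `d > 0`
    (lam : ℝ) (hlam : lam ∈ Set.Ioo 0 (2 * α))
    (a : ℕ → ℝ) (ha : ∀ n, a n ∈ Set.Icc (0 : ℝ) 1)
    (ha' : Filter.limsup a Filter.atTop < 1)
    (d : ℝ) (hd : 0 < d) (r : ℕ → ℝ) (hr : ∀ n, d ≤ r n)
    -- `F = (∩ EP(f_l)) ∩ (∩ F(S_i)) ∩ (∩ VI(A_k, C))` is nonempty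
    (F : Set H)
    (hF : F = {p | p ∈ C ∧ (∀ l, ∀ q ∈ C, 0 ≤ f l p q) ∧ (∀ i, S i p = p) ∧
      (∀ k, ∀ q ∈ C, 0 ≤ ⟪A k p, q - p⟫)})
    (hFne : F.Nonempty)
    -- the parallel hybrid algorithm
    (x : ℕ → H) (z : ℕ → Fin K → H) (uu : ℕ → Fin M → H) (y : ℕ → Fin N → H)
    (ln : ℕ → Fin K) (kn : ℕ → Fin M) (inn : ℕ → Fin N)
    (Cn Qn : ℕ → Set H)
    -- `z_n^l` solves the regularized equilibrium problem for `f_l` at `x_n`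
    (hz : ∀ n l, z n l ∈ C ∧
      ∀ q ∈ C, 0 ≤ f l (z n l) q + (1 / r n) * ⟪q - z n l, z n l - x n⟫)
    -- `l_n` attains `max{‖z_n^l - x_n‖}`, `z̄_n = z_n^{l_n}`
    (hln : ∀ n l, ‖z n l - x n‖ ≤ ‖z n (ln n) - x n‖)
    -- `u_n^k = P_C(z̄_n - λ A_k z̄_n)`
    (hu : ∀ n k, IsMetricProj C (z n (ln n) - lam • A k (z n (ln n))) (uu n k))
    -- `k_n` attains `max{‖u_n^k - x_n‖}`, `ū_n = u_n^{k_n}`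
    (hkn : ∀ n k, ‖uu n k - x n‖ ≤ ‖uu n (kn n) - x n‖)
    -- `y_n^i = α_n ū_n + (1 - α_n) S_i ū_n`
    (hy : ∀ n i, y n i = a n • uu n (kn n) + (1 - a n) • S i (uu n (kn n)))
    -- `i_n` attains `max{‖y_n^i - x_n‖}`, `ȳ_n = y_n^{i_n}`
    (hin : ∀ n i, ‖y n i - x n‖ ≤ ‖y n (inn n) - x n‖)
    -- `C_n = {v : ‖v - ȳ_n‖ ≤ ‖v - z̄_n‖ ≤ ‖v - x_n‖}`
    (hCn : ∀ n, Cn n = {v | ‖v - y n (inn n)‖ ≤ ‖v - z n (ln n)‖ ∧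
      ‖v - z n (ln n)‖ ≤ ‖v - x n‖})
    -- `Q_n = {v : ⟨x_0 - x_n, x_n - v⟩ ≥ 0}`
    (hQn : ∀ n, Qn n = {v | 0 ≤ ⟪x 0 - x n, x n - v⟫})
    -- `x_{n+1} = P_{C_n ∩ Q_n} x_0`
    (hx : ∀ n, IsMetricProj (Cn n ∩ Qn n) (x 0) (x (n + 1)))
    -- a subsequence `x_{φ(m)}` converges weakly to `x̂ ∈ C`
    (xhat : H) (hxhatC : xhat ∈ C) (φ : ℕ → ℕ) (hφ : StrictMono φ)
    (hweak : ∀ w : H,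
      Filter.Tendsto (fun m => ⟪x (φ m), w⟫) Filter.atTop (nhds ⟪xhat, w⟫)) :
    ∀ k, ∀ q ∈ C, 0 ≤ ⟪A k xhat, q - xhat⟫ := by
  intro k
  -- the fixed point p ∈ F
  obtain ⟨p, hp⟩ := hFne
  rw [hF] at hp
  obtain ⟨hpC, hpEP, hpS, hpVI⟩ := hp
  have hlam0 := hlam.1
  have hlam2 := hlam.2
  -- Lipschitz continuity of the A k
  have hLip : ∀ (k' : Fin M), ∀ v ∈ C, ∀ w ∈ C,
      ‖A k' v - A k' w‖ ≤ ‖v - w‖ / α := by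
    intro k' v hv w hw
    have h1 := hA k' v hv w hw
    have h2 := real_inner_le_norm (A k' v - A k' w) (v - w)
    rcases eq_or_lt_of_le (norm_nonneg (A k' v - A k' w)) with h0 | h0
    · rw [← h0]; positivity
    · rw [le_div_iff₀ hα]
      nlinarith
  -- contraction property of v ↦ v - lam • e under inverse strong monotonicity
  have hcontr : ∀ (w e : H), α * ‖e‖ ^ 2 ≤ ⟪e, w⟫ →
      ‖w - lam • e‖ ^ 2 ≤ ‖w‖ ^ 2 - lam * (2 * α - lam) * ‖e‖ ^ 2 := by
    intro w e hism
    rw [norm_sub_smul_sq]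
    nlinarith [mul_le_mul_of_nonneg_left hism hlam0.le]
  -- p is the projection of p - lam • A k' p onto C
  have hprojp : ∀ (k' : Fin M), IsMetricProj C (p - lam • A k' p) p := by
    intro k'
    apply proj_of_char hpC
    intro w hw
    have hre : p - lam • A k' p - p = -(lam • A k' p) := by abel
    rw [hre, inner_neg_left, real_inner_smul_left]
    have := hpVI k' w hw
    nlinarith
  -- Step A : ‖z n l - p‖ ≤ ‖x n - p‖
  have hzp : ∀ n l, ‖z n l - p‖ ≤ ‖x n - p‖ := by
    intro n l
    obtain ⟨hzC, hzineq⟩ := hz n l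
    have h1 := hzineq p hpC
    have h2 := hpEP l (z n l) hzC
    have h3 := hfA2 l (z n l) hzC p hpC
    have hrpos : 0 < r n := lt_of_lt_of_le hd (hr n)
    have h4 : 0 ≤ ⟪p - z n l, z n l - x n⟫ := by
      by_contra hneg
      push_neg at hneg
      have : (1 / r n) * ⟪p - z n l, z n l - x n⟫ < 0 :=
        mul_neg_of_pos_of_neg (by positivity) hneg
      linarith
    have h5 : ⟪z n l - p, x n - p⟫
        = ‖z n l - p‖ ^ 2 + ⟪p - z n l, z n l - x n⟫ := by
      rw [show p - z n l = -(z n l - p) by abel,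
        show z n l - x n = -(x n - z n l) by abel, inner_neg_neg,
        ← real_inner_self_eq_norm_sq, ← inner_add_right]
      congr 1
      abel
    have h6 := real_inner_le_norm (z n l - p) (x n - p)
    nlinarith [norm_nonneg (z n l - p), norm_nonneg (x n - p)]
  -- Step B : the two projection estimates
  have hB1 : ∀ n (k' : Fin M), ‖uu n k' - p‖ ^ 2 ≤ ‖z n (ln n) - p‖ ^ 2
      - lam * (2 * α - lam) * ‖A k' (z n (ln n)) - A k' p‖ ^ 2 := by
    intro n k'
    have hfirm := proj_firm hCcv (hu n k') (hprojp k')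
    have hzC := (hz n (ln n)).1
    have hva : z n (ln n) - lam • A k' (z n (ln n)) - (p - lam • A k' p)
        = (z n (ln n) - p) - lam • (A k' (z n (ln n)) - A k' p) := by module
    rw [hva] at hfirm
    have hism : α * ‖A k' (z n (ln n)) - A k' p‖ ^ 2
        ≤ ⟪A k' (z n (ln n)) - A k' p, z n (ln n) - p⟫ := hA k' _ hzC _ hpC
    have := hcontr _ _ hism
    nlinarith [sq_nonneg ‖z n (ln n) - p - lam • (A k' (z n (ln n)) - A k' p) - (uu n k' - p)‖]
  have hB2 : ∀ n (k' : Fin M), ‖uu n k' - p‖ ^ 2 ≤ ‖z n (ln n) - p‖ ^ 2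
      - ‖z n (ln n) - uu n k'‖ ^ 2
      + 2 * lam * ‖A k' (z n (ln n)) - A k' p‖ * ‖uu n k' - p‖ := by
    intro n k'
    have hfirm := proj_firm hCcv (hu n k') (hprojp k')
    have hva : z n (ln n) - lam • A k' (z n (ln n)) - (p - lam • A k' p)
        = (z n (ln n) - p) - lam • (A k' (z n (ln n)) - A k' p) := by module
    rw [hva] at hfirm
    have hvb : z n (ln n) - p - lam • (A k' (z n (ln n)) - A k' p) - (uu n k' - p)
        = (z n (ln n) - uu n k') - lam • (A k' (z n (ln n)) - A k' p) := by module
    rw [hvb] at hfirm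
    rw [norm_sub_smul_sq, norm_sub_smul_sq] at hfirm
    have hdiff : ⟪A k' (z n (ln n)) - A k' p, z n (ln n) - uu n k'⟫
        - ⟪A k' (z n (ln n)) - A k' p, z n (ln n) - p⟫
        = ⟪A k' (z n (ln n)) - A k' p, p - uu n k'⟫ := by
      rw [← inner_sub_right]
      congr 1
      abel
    have hcs := real_inner_le_norm (A k' (z n (ln n)) - A k' p) (p - uu n k')
    have hnrev : ‖p - uu n k'‖ = ‖uu n k' - p‖ := norm_sub_rev _ _
    rw [hnrev] at hcs
    have hdiff2 : 2 * lam * ⟪A k' (z n (ln n)) - A k' p, z n (ln n) - uu n k'⟫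
        = 2 * lam * ⟪A k' (z n (ln n)) - A k' p, z n (ln n) - p⟫
          + 2 * lam * ⟪A k' (z n (ln n)) - A k' p, p - uu n k'⟫ := by
      linear_combination 2 * lam * hdiff
    have hkey := mul_le_mul_of_nonneg_left hcs (by linarith : (0:ℝ) ≤ 2 * lam)
    linarith [hfirm, hdiff2, hkey]
  -- Step C : ‖y n i - p‖ ≤ ‖ū n - p‖
  have hubC : ∀ n, uu n (kn n) ∈ C := fun n => (hu n (kn n)).1
  have hyp : ∀ n i, ‖y n i - p‖ ≤ ‖uu n (kn n) - p‖ := by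
    intro n i
    have hre : y n i - p = a n • (uu n (kn n) - p)
        + (1 - a n) • (S i (uu n (kn n)) - p) := by
      rw [hy n i]; module
    rw [hre]
    have hSnp : ‖S i (uu n (kn n)) - p‖ ≤ ‖uu n (kn n) - p‖ := by
      have := hS i (uu n (kn n)) (hubC n) p hpC
      rwa [hpS i] at this
    calc ‖a n • (uu n (kn n) - p) + (1 - a n) • (S i (uu n (kn n)) - p)‖
        ≤ ‖a n • (uu n (kn n) - p)‖ + ‖(1 - a n) • (S i (uu n (kn n)) - p)‖ :=
          norm_add_le _ _
      _ = a n * ‖uu n (kn n) - p‖ + (1 - a n) * ‖S i (uu n (kn n)) - p‖ := by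
          rw [norm_smul, norm_smul, Real.norm_eq_abs, Real.norm_eq_abs,
            abs_of_nonneg (ha n).1, abs_of_nonneg (by linarith [(ha n).2])]
      _ ≤ a n * ‖uu n (kn n) - p‖ + (1 - a n) * ‖uu n (kn n) - p‖ := by
          have h1 := (ha n).2
          nlinarith [hSnp, (ha n).1]
      _ = ‖uu n (kn n) - p‖ := by ring
  have hup : ∀ n (k' : Fin M), ‖uu n k' - p‖ ≤ ‖z n (ln n) - p‖ := by
    intro n k'
    have h1 := hB1 n k'
    nlinarith [norm_nonneg (uu n k' - p), norm_nonneg (z n (ln n) - p),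
      sq_nonneg ‖A k' (z n (ln n)) - A k' p‖, mul_pos hlam0 (by linarith : (0:ℝ) < 2 * α - lam)]
  -- convexity of C n ∩ Q n
  have hconvN : ∀ (v w : H), Convex ℝ {u : H | ‖u - v‖ ≤ ‖u - w‖} := by
    intro v w
    have hset : {u : H | ‖u - v‖ ≤ ‖u - w‖}
        = {u : H | 2 * ⟪u, w - v⟫ ≤ ‖w‖ ^ 2 - ‖v‖ ^ 2} := by
      ext u
      simp only [Set.mem_setOf_eq]
      constructor
      · intro h
        have hsq := pow_le_pow_left₀ (norm_nonneg _) h 2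
        rw [norm_sub_sq_real, norm_sub_sq_real] at hsq
        rw [inner_sub_right]
        linarith
      · intro h
        have hsq : ‖u - v‖ ^ 2 ≤ ‖u - w‖ ^ 2 := by
          rw [norm_sub_sq_real, norm_sub_sq_real]
          rw [inner_sub_right] at h
          linarith
        nlinarith [norm_nonneg (u - v), norm_nonneg (u - w)]
    rw [hset]
    have hlin : IsLinearMap ℝ (fun u : H => 2 * ⟪u, w - v⟫) :=
      ⟨fun u₁ u₂ => by rw [inner_add_left]; ring,
       fun c u₁ => by rw [real_inner_smul_left, smul_eq_mul]; ring⟩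
    exact convex_halfSpace_le hlin _
  have hconvQ : ∀ n, Convex ℝ (Qn n) := by
    intro n
    rw [hQn n]
    have hset : {v : H | 0 ≤ ⟪x 0 - x n, x n - v⟫}
        = {v : H | ⟪x 0 - x n, v⟫ ≤ ⟪x 0 - x n, x n⟫} := by
      ext v
      simp only [Set.mem_setOf_eq, inner_sub_right]
      constructor <;> intro h <;> linarith
    rw [hset]
    have hlin : IsLinearMap ℝ (fun v : H => ⟪x 0 - x n, v⟫) :=
      ⟨fun u₁ u₂ => inner_add_right _ _ _, fun c u₁ => real_inner_smul_right _ _ _⟩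
    exact convex_halfSpace_le hlin _
  have hconv : ∀ n, Convex ℝ (Cn n ∩ Qn n) := by
    intro n
    apply Convex.inter _ (hconvQ n)
    rw [hCn n]
    have hset : {v : H | ‖v - y n (inn n)‖ ≤ ‖v - z n (ln n)‖ ∧
        ‖v - z n (ln n)‖ ≤ ‖v - x n‖}
        = {v : H | ‖v - y n (inn n)‖ ≤ ‖v - z n (ln n)‖}
          ∩ {v : H | ‖v - z n (ln n)‖ ≤ ‖v - x n‖} := rfl
    rw [hset]
    exact (hconvN _ _).inter (hconvN _ _)
  -- p belongs to every C n
  have hpCn : ∀ n, p ∈ Cn n := by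
    intro n
    rw [hCn n]
    refine ⟨?_, ?_⟩
    · rw [norm_sub_rev, norm_sub_rev p (z n (ln n))]
      exact le_trans (hyp n (inn n)) (hup n (kn n))
    · rw [norm_sub_rev, norm_sub_rev p (x n)]
      exact hzp n (ln n)
  -- p belongs to every Q n (by induction)
  have hpQn : ∀ n, p ∈ Qn n := by
    intro n
    induction n with
    | zero => rw [hQn 0]; simp
    | succ m ih =>
      rw [hQn (m + 1)]
      have hchar := proj_char (hconv m) (hx m) p ⟨hpCn m, ih⟩
      simp only [Set.mem_setOf_eq]
      rw [show x (m + 1) - p = -(p - x (m + 1)) by abel, inner_neg_right]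
      linarith
  -- boundedness of x n
  have hxB : ∀ n, ‖x n - x 0‖ ≤ ‖p - x 0‖ := by
    intro n
    cases n with
    | zero => simp
    | succ m => exact (hx m).2 p ⟨hpCn m, hpQn m⟩
  set B : ℝ := ‖p - x 0‖ with hBdef
  have hxpB : ∀ n, ‖x n - p‖ ≤ 2 * B := by
    intro n
    calc ‖x n - p‖ ≤ ‖x n - x 0‖ + ‖x 0 - p‖ := norm_sub_le_norm_sub_add_norm_sub _ _ _
      _ ≤ B + B := by
          refine add_le_add (hxB n) ?_
          rw [norm_sub_rev]
      _ = 2 * B := by ring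
  -- monotone estimate
  have hmono : ∀ n, ‖x n - x 0‖ ^ 2 + ‖x (n + 1) - x n‖ ^ 2 ≤ ‖x (n + 1) - x 0‖ ^ 2 := by
    intro n
    have hmem : x (n + 1) ∈ Qn n := (hx n).1.2
    rw [hQn n] at hmem
    simp only [Set.mem_setOf_eq] at hmem
    have hinner : ⟪x (n + 1) - x n, x n - x 0⟫ = ⟪x 0 - x n, x n - x (n + 1)⟫ := by
      rw [show x 0 - x n = -(x n - x 0) by abel,
        show x n - x (n + 1) = -(x (n + 1) - x n) by abel, inner_neg_neg, real_inner_comm]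
    have hexp : ‖x (n + 1) - x 0‖ ^ 2
        = ‖x (n + 1) - x n‖ ^ 2 + 2 * ⟪x (n + 1) - x n, x n - x 0⟫ + ‖x n - x 0‖ ^ 2 := by
      rw [show x (n + 1) - x 0 = (x (n + 1) - x n) + (x n - x 0) by abel, norm_add_sq_real]
    rw [hexp, hinner]
    linarith
  -- convergence of ‖x n - x 0‖
  have hsmono : Monotone (fun n => ‖x n - x 0‖) := by
    apply monotone_nat_of_le_succ
    intro n
    have := hmono n
    nlinarith [norm_nonneg (x n - x 0), norm_nonneg (x (n + 1) - x 0),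
      sq_nonneg ‖x (n + 1) - x n‖]
  have hsbdd : BddAbove (Set.range fun n => ‖x n - x 0‖) := by
    refine ⟨B, ?_⟩
    rintro _ ⟨n, rfl⟩
    exact hxB n
  have hslim : Filter.Tendsto (fun n => ‖x n - x 0‖) Filter.atTop
      (nhds (⨆ n, ‖x n - x 0‖)) := tendsto_atTop_ciSup hsmono hsbdd
  have hsqlim : Filter.Tendsto (fun n => ‖x n - x 0‖ ^ 2) Filter.atTop
      (nhds ((⨆ n, ‖x n - x 0‖) ^ 2)) := hslim.pow 2
  have hdiff0 : Filter.Tendsto (fun n => ‖x (n + 1) - x 0‖ ^ 2 - ‖x n - x 0‖ ^ 2)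
      Filter.atTop (nhds 0) := by
    have hshift : Filter.Tendsto (fun n => ‖x (n + 1) - x 0‖ ^ 2) Filter.atTop
        (nhds ((⨆ n, ‖x n - x 0‖) ^ 2)) :=
      hsqlim.comp (tendsto_add_atTop_nat 1)
    have := hshift.sub hsqlim
    simpa using this
  have hxx1 : Filter.Tendsto (fun n => ‖x (n + 1) - x n‖) Filter.atTop (nhds 0) := by
    apply tendsto_zero_of_sq (fun n => norm_nonneg _)
    apply squeeze_zero (fun n => sq_nonneg _) (fun n => by linarith [hmono n]) hdiff0
  -- x (n+1) ∈ C n consequences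
  have hCmem : ∀ n, ‖x (n + 1) - y n (inn n)‖ ≤ ‖x (n + 1) - z n (ln n)‖ ∧
      ‖x (n + 1) - z n (ln n)‖ ≤ ‖x (n + 1) - x n‖ := by
    intro n
    have := (hx n).1.1
    rw [hCn n] at this
    exact this
  have hzx : Filter.Tendsto (fun n => ‖z n (ln n) - x n‖) Filter.atTop (nhds 0) := by
    apply squeeze_zero (fun n => norm_nonneg _) (g := fun n => 2 * ‖x (n + 1) - x n‖)
    · intro n
      calc ‖z n (ln n) - x n‖ ≤ ‖z n (ln n) - x (n + 1)‖ + ‖x (n + 1) - x n‖ :=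
            norm_sub_le_norm_sub_add_norm_sub _ _ _
        _ ≤ 2 * ‖x (n + 1) - x n‖ := by
            rw [norm_sub_rev]
            linarith [(hCmem n).2]
    · simpa using hxx1.const_mul 2
  have hyx : Filter.Tendsto (fun n => ‖y n (inn n) - x n‖) Filter.atTop (nhds 0) := by
    apply squeeze_zero (fun n => norm_nonneg _) (g := fun n => 2 * ‖x (n + 1) - x n‖)
    · intro n
      calc ‖y n (inn n) - x n‖ ≤ ‖y n (inn n) - x (n + 1)‖ + ‖x (n + 1) - x n‖ :=
            norm_sub_le_norm_sub_add_norm_sub _ _ _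
        _ ≤ 2 * ‖x (n + 1) - x n‖ := by
            rw [norm_sub_rev]
            linarith [(hCmem n).1, (hCmem n).2]
    · simpa using hxx1.const_mul 2
  -- bounds
  have hzbB : ∀ n, ‖z n (ln n) - p‖ ≤ 2 * B := fun n => le_trans (hzp n (ln n)) (hxpB n)
  have hubB : ∀ n, ∀ k', ‖uu n k' - p‖ ≤ 2 * B := fun n k' =>
    le_trans (hup n k') (hzbB n)
  have hybB : ∀ n, ‖y n (inn n) - p‖ ≤ 2 * B := fun n =>
    le_trans (hyp n (inn n)) (hubB n (kn n))
  -- D n → 0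
  set Dn : ℕ → ℝ := fun n => ‖z n (ln n) - p‖ ^ 2 - ‖y n (inn n) - p‖ ^ 2 with hDdef
  have hDn0 : ∀ n, 0 ≤ Dn n := by
    intro n
    have h1 := hyp n (inn n)
    have h2 := hup n (kn n)
    simp only [hDdef]
    nlinarith [norm_nonneg (y n (inn n) - p), norm_nonneg (z n (ln n) - p)]
  have hDnlim : Filter.Tendsto Dn Filter.atTop (nhds 0) := by
    apply squeeze_zero hDn0
      (g := fun n => (‖z n (ln n) - x n‖ + ‖y n (inn n) - x n‖) * (4 * B))
    · intro n
      have habs : |‖z n (ln n) - p‖ - ‖y n (inn n) - p‖| ≤ ‖z n (ln n) - y n (inn n)‖ := by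
        have h := abs_norm_sub_norm_le (z n (ln n) - p) (y n (inn n) - p)
        have heq : (z n (ln n) - p) - (y n (inn n) - p) = z n (ln n) - y n (inn n) := by abel
        rwa [heq] at h
      have htri : ‖z n (ln n) - y n (inn n)‖ ≤ ‖z n (ln n) - x n‖ + ‖y n (inn n) - x n‖ := by
        calc ‖z n (ln n) - y n (inn n)‖
            ≤ ‖z n (ln n) - x n‖ + ‖x n - y n (inn n)‖ :=
              norm_sub_le_norm_sub_add_norm_sub _ _ _
          _ = ‖z n (ln n) - x n‖ + ‖y n (inn n) - x n‖ := by rw [norm_sub_rev (x n)]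
      have h1 := abs_le.mp habs
      have h2 := hzbB n
      have h3 := hybB n
      simp only [hDdef]
      nlinarith [norm_nonneg (y n (inn n) - p), norm_nonneg (z n (ln n) - p),
        norm_nonneg (z n (ln n) - x n), norm_nonneg (y n (inn n) - x n)]
    · have := (hzx.add hyx).mul_const (4 * B)
      simpa using this
  -- e n → 0
  set en : ℕ → ℝ := fun n => ‖A (kn n) (z n (ln n)) - A (kn n) p‖ with hedef
  have henlim : Filter.Tendsto en Filter.atTop (nhds 0) := by
    apply tendsto_zero_of_sq (fun n => norm_nonneg _)
    have hc : (0:ℝ) < lam * (2 * α - lam) := mul_pos hlam0 (by linarith)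
    apply squeeze_zero (fun n => sq_nonneg _)
      (g := fun n => Dn n * (1 / (lam * (2 * α - lam))))
    · intro n
      have h1 := hB1 n (kn n)
      have h2 := hyp n (inn n)
      rw [mul_one_div, le_div_iff₀ hc]
      simp only [hDdef, hedef]
      nlinarith [norm_nonneg (y n (inn n) - p), norm_nonneg (uu n (kn n) - p)]
    · simpa using hDnlim.mul_const (1 / (lam * (2 * α - lam)))
  -- ‖z̄ n - ū n‖ → 0
  have hzulim : Filter.Tendsto (fun n => ‖z n (ln n) - uu n (kn n)‖) Filter.atTop
      (nhds 0) := by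
    apply tendsto_zero_of_sq (fun n => norm_nonneg _)
    apply squeeze_zero (fun n => sq_nonneg _)
      (g := fun n => Dn n + (4 * lam * B) * en n)
    · intro n
      have h1 := hB2 n (kn n)
      have h2 := hyp n (inn n)
      have h3 := hubB n (kn n)
      have h4 : (0:ℝ) ≤ en n := norm_nonneg _
      simp only [hDdef, hedef] at *
      nlinarith [norm_nonneg (y n (inn n) - p), norm_nonneg (uu n (kn n) - p),
        mul_le_mul_of_nonneg_left h3
          (mul_nonneg (mul_nonneg (by norm_num : (0:ℝ) ≤ 2) hlam0.le) h4),
        mul_le_mul h2 h2 (norm_nonneg _) (norm_nonneg _)]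
    · have := hDnlim.add (henlim.const_mul (4 * lam * B))
      simpa using this
  -- ‖uu n k - x n‖ → 0 and ‖z̄ n - uu n k‖ → 0
  have huxk : Filter.Tendsto (fun n => ‖uu n k - x n‖) Filter.atTop (nhds 0) := by
    apply squeeze_zero (fun n => norm_nonneg _)
      (g := fun n => ‖z n (ln n) - uu n (kn n)‖ + ‖z n (ln n) - x n‖)
    · intro n
      calc ‖uu n k - x n‖ ≤ ‖uu n (kn n) - x n‖ := hkn n k
        _ ≤ ‖uu n (kn n) - z n (ln n)‖ + ‖z n (ln n) - x n‖ :=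
            norm_sub_le_norm_sub_add_norm_sub _ _ _
        _ = ‖z n (ln n) - uu n (kn n)‖ + ‖z n (ln n) - x n‖ := by
            rw [norm_sub_rev (uu n (kn n))]
    · simpa using hzulim.add hzx
  have hzuk : Filter.Tendsto (fun n => ‖z n (ln n) - uu n k‖) Filter.atTop (nhds 0) := by
    apply squeeze_zero (fun n => norm_nonneg _)
      (g := fun n => ‖z n (ln n) - x n‖ + ‖uu n k - x n‖)
    · intro n
      have h := norm_sub_le_norm_sub_add_norm_sub (z n (ln n)) (x n) (uu n k)
      rw [norm_sub_rev (x n) (uu n k)] at h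
      exact h
    · simpa using hzx.add huxk
  -- Minty-type inequality at the weak limit
  have hMinty : ∀ q' ∈ C, 0 ≤ ⟪A k q', q' - xhat⟫ := by
    intro q' hq'
    set Cst : ℝ := (‖q' - p‖ + 2 * B) / lam + (2 * B + ‖p - q'‖) / α with hCstdef
    have hCst0 : 0 ≤ Cst := by
      have hB0 : (0:ℝ) ≤ B := norm_nonneg _
      have h1 : (0:ℝ) ≤ ‖q' - p‖ := norm_nonneg _
      have h2 : (0:ℝ) ≤ ‖p - q'‖ := norm_nonneg _
      rw [hCstdef]
      exact add_nonneg (div_nonneg (by linarith) hlam0.le) (div_nonneg (by linarith) hα.le)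
    have hstep : ∀ n, -(‖z n (ln n) - uu n k‖ * Cst) ≤ ⟪A k q', q' - uu n k⟫ := by
      intro n
      have hzC : z n (ln n) ∈ C := (hz n (ln n)).1
      have huC : uu n k ∈ C := (hu n k).1
      -- projection characterization
      have h1 := proj_char hCcv (hu n k) q' hq'
      have hre : z n (ln n) - lam • A k (z n (ln n)) - uu n k
          = (z n (ln n) - uu n k) - lam • A k (z n (ln n)) := by abel
      rw [hre, inner_sub_left, real_inner_smul_left] at h1
      -- monotonicity
      have hmon : 0 ≤ ⟪A k q' - A k (z n (ln n)), q' - z n (ln n)⟫ :=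
        le_trans (by positivity) (hA k q' hq' (z n (ln n)) hzC)
      -- identity
      have hid : ⟪A k q', q' - uu n k⟫
          = ⟪A k q' - A k (z n (ln n)), q' - z n (ln n)⟫
            + ⟪A k (z n (ln n)), q' - uu n k⟫
            + ⟪A k q' - A k (z n (ln n)), z n (ln n) - uu n k⟫ := by
        simp only [inner_sub_left, inner_sub_right]
        ring
      -- Cauchy-Schwarz bounds
      have hcs1 := abs_real_inner_le_norm (z n (ln n) - uu n k) (q' - uu n k)
      have hcs2 := abs_real_inner_le_norm (A k q' - A k (z n (ln n))) (z n (ln n) - uu n k)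
      have hlip := hLip k q' hq' (z n (ln n)) hzC
      have hqu : ‖q' - uu n k‖ ≤ ‖q' - p‖ + 2 * B := by
        calc ‖q' - uu n k‖ ≤ ‖q' - p‖ + ‖p - uu n k‖ := norm_sub_le_norm_sub_add_norm_sub _ _ _
          _ ≤ ‖q' - p‖ + 2 * B := by
              rw [norm_sub_rev p (uu n k)]
              linarith [hubB n k]
      have hzq : ‖z n (ln n) - q'‖ ≤ 2 * B + ‖p - q'‖ := by
        calc ‖z n (ln n) - q'‖ ≤ ‖z n (ln n) - p‖ + ‖p - q'‖ :=
            norm_sub_le_norm_sub_add_norm_sub _ _ _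
          _ ≤ 2 * B + ‖p - q'‖ := by linarith [hzbB n]
      have hq'z : ‖A k q' - A k (z n (ln n))‖ ≤ (2 * B + ‖p - q'‖) / α := by
        refine le_trans hlip ?_
        rw [norm_sub_rev q']
        exact (div_le_div_iff_of_pos_right hα).mpr hzq
      have habs1 := abs_le.mp hcs1
      have habs2 := abs_le.mp hcs2
      have hzu0 : (0:ℝ) ≤ ‖z n (ln n) - uu n k‖ := norm_nonneg _
      -- combine
      have hX : ⟪z n (ln n) - uu n k, q' - uu n k⟫ / lam ≤ ⟪A k (z n (ln n)), q' - uu n k⟫ := by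
        rw [div_le_iff₀ hlam0]
        nlinarith
      have hXlb : -(‖z n (ln n) - uu n k‖ * (‖q' - p‖ + 2 * B)) / lam
          ≤ ⟪z n (ln n) - uu n k, q' - uu n k⟫ / lam := by
        apply (div_le_div_iff_of_pos_right hlam0).mpr
        nlinarith [habs1.1, mul_le_mul_of_nonneg_left hqu hzu0]
      have hYlb : -(((2 * B + ‖p - q'‖) / α) * ‖z n (ln n) - uu n k‖)
          ≤ ⟪A k q' - A k (z n (ln n)), z n (ln n) - uu n k⟫ := by
        have := habs2.1
        nlinarith [mul_le_mul_of_nonneg_right hq'z hzu0, abs_nonneg (⟪A k q' - A k (z n (ln n)), z n (ln n) - uu n k⟫)]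
      rw [hid]
      have hfin : -(‖z n (ln n) - uu n k‖ * Cst)
          = -(‖z n (ln n) - uu n k‖ * (‖q' - p‖ + 2 * B)) / lam
            + (-(((2 * B + ‖p - q'‖) / α) * ‖z n (ln n) - uu n k‖)) := by
        simp only [hCstdef]
        field_simp
        ring
      rw [hfin]
      have := le_trans hXlb hX
      linarith
    -- pass to the limit along the subsequence
    have hlim : Filter.Tendsto (fun m => ⟪A k q', q' - uu (φ m) k⟫) Filter.atTop
        (nhds ⟪A k q', q' - xhat⟫) := by
      have hsplit : ∀ m, ⟪A k q', q' - uu (φ m) k⟫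
          = ⟪A k q', q'⟫ - ⟪x (φ m), A k q'⟫ - ⟪A k q', uu (φ m) k - x (φ m)⟫ := by
        intro m
        rw [inner_sub_right, inner_sub_right, real_inner_comm (x (φ m))]
        ring
      have h1 : Filter.Tendsto (fun m => ⟪x (φ m), A k q'⟫) Filter.atTop
          (nhds ⟪xhat, A k q'⟫) := hweak (A k q')
      have h2 : Filter.Tendsto (fun m => ⟪A k q', uu (φ m) k - x (φ m)⟫) Filter.atTop
          (nhds 0) := by
        refine squeeze_zero_norm (fun m => abs_real_inner_le_norm _ _) ?_
        have := (huxk.comp (hφ.tendsto_atTop)).const_mul ‖A k q'‖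
        simpa using this
      have hcomb := (tendsto_const_nhds (x := ⟪A k q', q'⟫) (f := Filter.atTop)).sub h1
        |>.sub h2
      have heq : ⟪A k q', q' - xhat⟫ = ⟪A k q', q'⟫ - ⟪xhat, A k q'⟫ - 0 := by
        rw [inner_sub_right, real_inner_comm xhat]
        ring
      rw [heq]
      exact hcomb.congr (fun m => (hsplit m).symm)
    have herr : Filter.Tendsto (fun m => -(‖z (φ m) (ln (φ m)) - uu (φ m) k‖ * Cst))
        Filter.atTop (nhds 0) := by
      have := (hzuk.comp (hφ.tendsto_atTop)).mul_const Cst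
      have hneg := this.neg
      simpa using hneg
    exact le_of_tendsto_of_tendsto' herr hlim (fun m => hstep (φ m))
  -- Minty argument: conclude the variational inequality
  intro q hq
  apply small_t_aux (c := ‖q - xhat‖ ^ 2 / α) (by positivity)
  intro t ht
  have hqt : t • q + (1 - t) • xhat ∈ C :=
    hCcv hq hxhatC ht.1.le (by linarith [ht.2]) (by ring)
  have h1 := hMinty _ hqt
  have hre : t • q + (1 - t) • xhat - xhat = t • (q - xhat) := by module
  rw [hre, real_inner_smul_right] at h1
  have h1' : 0 ≤ ⟪A k (t • q + (1 - t) • xhat), q - xhat⟫ :=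
    nonneg_of_mul_nonneg_right h1 ht.1
  have hid : ⟪A k xhat, q - xhat⟫ = ⟪A k (t • q + (1 - t) • xhat), q - xhat⟫
      + ⟪A k xhat - A k (t • q + (1 - t) • xhat), q - xhat⟫ := by
    simp only [inner_sub_left]
    ring
  have hlip := hLip k xhat hxhatC _ hqt
  have hnq : ‖xhat - (t • q + (1 - t) • xhat)‖ = t * ‖q - xhat‖ := by
    have : xhat - (t • q + (1 - t) • xhat) = t • (xhat - q) := by module
    rw [this, norm_smul, Real.norm_eq_abs, abs_of_pos ht.1, norm_sub_rev]
  have hcs := abs_le.mp (abs_real_inner_le_norm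
    (A k xhat - A k (t • q + (1 - t) • xhat)) (q - xhat))
  have hlb : -(t * ‖q - xhat‖ ^ 2 / α) ≤ ⟪A k xhat - A k (t • q + (1 - t) • xhat), q - xhat⟫ := by
    have hbd : ‖A k xhat - A k (t • q + (1 - t) • xhat)‖ ≤ t * ‖q - xhat‖ / α := by
      rw [← hnq]
      exact hlip
    have h0 : (0:ℝ) ≤ ‖q - xhat‖ := norm_nonneg _
    have hm1 : ‖A k xhat - A k (t • q + (1 - t) • xhat)‖ * ‖q - xhat‖
        ≤ t * ‖q - xhat‖ / α * ‖q - xhat‖ := mul_le_mul_of_nonneg_right hbd h0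
    have hm2 : t * ‖q - xhat‖ / α * ‖q - xhat‖ = t * ‖q - xhat‖ ^ 2 / α := by ring
    linarith [hcs.1]
  rw [hid] at *
  have : t * (‖q - xhat‖ ^ 2 / α) = t * ‖q - xhat‖ ^ 2 / α := by ring
  linarith [h1', hlb, this.ge]
end

section
/- Under the stated hypotheses, for the parallel hybrid algorithm, if a subsequence {x_m} of {x_n} converges weakly to some x̂ ∈ C, then x̂ ∈ EP(f_l) for every l = 1,…,K. -/
open Filter Topology
open scoped RealInnerProductSpace

section Aux
variable {H : Type*} [NormedAddCommGroup H] [InnerProductSpace ℝ H]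

lemma le_of_sq_le_sq'' {a b : ℝ} (ha : 0 ≤ a) (hb : 0 ≤ b) (h : a ^ 2 ≤ b ^ 2) : a ≤ b := by
  have := Real.sqrt_le_sqrt h
  rwa [Real.sqrt_sq ha, Real.sqrt_sq hb] at this

lemma metricProj_inner_le {D : Set H} (hconv : Convex ℝ D) {x p : H}
    (h : IsMetricProj D x p) : ∀ w ∈ D, ⟪x - p, w - p⟫ ≤ 0 := by
  have hp := h.1
  haveI : Nonempty D := ⟨⟨p, hp⟩⟩
  have he : ‖x - p‖ = ⨅ w : D, ‖x - w‖ := by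
    have h1 : ∀ w : D, ‖x - p‖ ≤ ‖x - (w : H)‖ := by
      intro w
      rw [norm_sub_rev x p, norm_sub_rev x (w : H)]
      exact h.2 w w.2
    exact le_antisymm (le_ciInf h1)
      (ciInf_le ⟨0, by rintro t ⟨w, rfl⟩; exact norm_nonneg _⟩ (⟨p, hp⟩ : D))
  exact (norm_eq_iInf_iff_real_inner_le_zero hconv hp).mp he

lemma inner_halfspace_convex (c : H) (t : ℝ) : Convex ℝ {v : H | ⟪c, v⟫ ≤ t} := by
  intro v1 h1 v2 h2 s u hs hu hsu
  simp only [Set.mem_setOf_eq, inner_add_right, real_inner_smul_right] at *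
  have e1 := mul_le_mul_of_nonneg_left h1 hs
  have e2 := mul_le_mul_of_nonneg_left h2 hu
  have e3 : s * t + u * t = t := by rw [← add_mul, hsu, one_mul]
  linarith

lemma inner_halfspace_closed (c : H) (t : ℝ) : IsClosed {v : H | ⟪c, v⟫ ≤ t} :=
  isClosed_le (continuous_const.inner continuous_id) continuous_const

lemma norm_halfspace_eq (b c : H) :
    {v : H | ‖v - b‖ ≤ ‖v - c‖} = {v : H | ⟪c - b, v⟫ ≤ (‖c‖ ^ 2 - ‖b‖ ^ 2) / 2} := by
  ext v
  simp only [Set.mem_setOf_eq]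
  have h1 : ‖v - b‖ ^ 2 = ‖v‖ ^ 2 - 2 * ⟪v, b⟫ + ‖b‖ ^ 2 := norm_sub_sq_real v b
  have h2 : ‖v - c‖ ^ 2 = ‖v‖ ^ 2 - 2 * ⟪v, c⟫ + ‖c‖ ^ 2 := norm_sub_sq_real v c
  have h3 : ⟪c - b, v⟫ = ⟪v, c⟫ - ⟪v, b⟫ := by
    rw [inner_sub_left, real_inner_comm c v, real_inner_comm b v]
  constructor
  · intro h
    have hsq : ‖v - b‖ ^ 2 ≤ ‖v - c‖ ^ 2 := pow_le_pow_left₀ (norm_nonneg _) h 2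
    linarith
  · intro h
    exact le_of_sq_le_sq'' (norm_nonneg _) (norm_nonneg _) (by linarith)

lemma norm_halfspace_convex (b c : H) : Convex ℝ {v : H | ‖v - b‖ ≤ ‖v - c‖} := by
  rw [norm_halfspace_eq]; exact inner_halfspace_convex _ _

lemma sublevel_closed {C : Set H} (hCcl : IsClosed C) {g : H → ℝ}
    (hlsc : LowerSemicontinuousOn g C) (c : ℝ) : IsClosed {v ∈ C | g v ≤ c} := by
  refine isClosed_of_closure_subset fun x hx => ?_
  have hsub : {v ∈ C | g v ≤ c} ⊆ C := fun v hv => hv.1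
  have hxC : x ∈ C := hCcl.closure_eq ▸ closure_mono hsub hx
  have hne : (nhdsWithin x {v ∈ C | g v ≤ c}).NeBot := mem_closure_iff_nhdsWithin_neBot.mp hx
  refine ⟨hxC, ?_⟩
  by_contra hgt
  push_neg at hgt
  have hev := hlsc x hxC c hgt
  have hev2 : ∀ᶠ v in nhdsWithin x {v ∈ C | g v ≤ c}, c < g v :=
    hev.filter_mono (nhdsWithin_mono x hsub)
  have hev3 : ∀ᶠ v in nhdsWithin x {v ∈ C | g v ≤ c}, v ∈ {v ∈ C | g v ≤ c} :=
    eventually_mem_nhdsWithin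
  obtain ⟨v, hv1, hv2⟩ := (hev2.and hev3).exists
  exact absurd hv2.2 (not_le.mpr hv1)

lemma weak_seq_closed [CompleteSpace H] {E : Set H} (hconv : Convex ℝ E) (hcl : IsClosed E)
    {w : ℕ → H} {w0 : H} (hmem : ∀ᶠ m in atTop, w m ∈ E)
    (hw : ∀ u : H, Tendsto (fun m => ⟪w m, u⟫) atTop (𝓝 ⟪w0, u⟫)) : w0 ∈ E := by
  by_contra hx
  obtain ⟨G, u0, hGlt, hGx⟩ := geometric_hahn_banach_closed_point hconv hcl hx
  set g := (InnerProductSpace.toDual ℝ H).symm G with hg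
  have hgr : ∀ v : H, G v = ⟪v, g⟫ := by
    intro v
    rw [real_inner_comm, hg, InnerProductSpace.toDual_symm_apply]
  have htend : Tendsto (fun m => G (w m)) atTop (𝓝 ⟪w0, g⟫) := by
    refine (hw g).congr fun m => ?_
    rw [hgr]
  have hle : ⟪w0, g⟫ ≤ u0 := le_of_tendsto htend (hmem.mono fun m hm => (hGlt _ hm).le)
  rw [hgr w0] at hGx
  linarith

end Aux

theorem weak_limits_solve_equilibrium_problems
    {H : Type*} [NormedAddCommGroup H] [InnerProductSpace ℝ H] [CompleteSpace H]
    -- `C` is a nonempty closed convex subset of `H`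
    (C : Set H) (hCne : C.Nonempty) (hCcl : IsClosed C) (hCcv : Convex ℝ C)
    (K M N : ℕ)
    -- the bifunctions `f_l : C × C → ℝ` satisfy conditions (A1)-(A4)
    (f : Fin K → H → H → ℝ)
    (hfA1 : ∀ l, ∀ p ∈ C, f l p p = 0)
    (hfA2 : ∀ l, ∀ p ∈ C, ∀ q ∈ C, f l p q + f l q p ≤ 0)
    (hfA3 : ∀ l, ∀ p ∈ C, ∀ q ∈ C, ∀ w ∈ C,
      Filter.limsup (fun t : ℝ => f l (t • w + (1 - t) • p) q)
        (nhdsWithin 0 (Set.Ioi 0)) ≤ f l p q)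
    (hfA4cv : ∀ l, ∀ p ∈ C, ConvexOn ℝ C (f l p))
    (hfA4lsc : ∀ l, ∀ p ∈ C, LowerSemicontinuousOn (f l p) C)
    -- the mappings `A_k : C → H` are `α`-inverse strongly monotone
    (α : ℝ) (hα : 0 < α) (A : Fin M → H → H)
    (hA : ∀ k, ∀ p ∈ C, ∀ q ∈ C, α * ‖A k p - A k q‖ ^ 2 ≤ ⟪A k p - A k q, p - q⟫)
    -- the mappings `S_i : C → C` are nonexpansive
    (S : Fin N → H → H) (hSmap : ∀ i, ∀ p ∈ C, S i p ∈ C)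
    (hS : ∀ i, ∀ p ∈ C, ∀ q ∈ C, ‖S i p - S i q‖ ≤ ‖p - q‖)
    -- parameters: `λ ∈ (0, 2α)`, `{α_n} ⊂ [0,1]`, `{r_n} ⊂ [d, ∞)`, `d > 0`
    (lam : ℝ) (hlam : lam ∈ Set.Ioo 0 (2 * α))
    (a : ℕ → ℝ) (ha : ∀ n, a n ∈ Set.Icc (0 : ℝ) 1)
    (ha' : Filter.limsup a Filter.atTop < 1)
    (d : ℝ) (hd : 0 < d) (r : ℕ → ℝ) (hr : ∀ n, d ≤ r n)
    -- `F = (∩ EP(f_l)) ∩ (∩ F(S_i)) ∩ (∩ VI(A_k, C))` is nonempty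
    (F : Set H)
    (hF : F = {p | p ∈ C ∧ (∀ l, ∀ q ∈ C, 0 ≤ f l p q) ∧ (∀ i, S i p = p) ∧
      (∀ k, ∀ q ∈ C, 0 ≤ ⟪A k p, q - p⟫)})
    (hFne : F.Nonempty)
    -- the parallel hybrid algorithm
    (x : ℕ → H) (z : ℕ → Fin K → H) (uu : ℕ → Fin M → H) (y : ℕ → Fin N → H)
    (ln : ℕ → Fin K) (kn : ℕ → Fin M) (inn : ℕ → Fin N)
    (Cn Qn : ℕ → Set H)
    -- `z_n^l` solves the regularized equilibrium problem for `f_l` at `x_n`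
    (hz : ∀ n l, z n l ∈ C ∧
      ∀ q ∈ C, 0 ≤ f l (z n l) q + (1 / r n) * ⟪q - z n l, z n l - x n⟫)
    -- `l_n` attains `max{‖z_n^l - x_n‖}`, `z̄_n = z_n^{l_n}`
    (hln : ∀ n l, ‖z n l - x n‖ ≤ ‖z n (ln n) - x n‖)
    -- `u_n^k = P_C(z̄_n - λ A_k z̄_n)`
    (hu : ∀ n k, IsMetricProj C (z n (ln n) - lam • A k (z n (ln n))) (uu n k))
    -- `k_n` attains `max{‖u_n^k - x_n‖}`, `ū_n = u_n^{k_n}`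
    (hkn : ∀ n k, ‖uu n k - x n‖ ≤ ‖uu n (kn n) - x n‖)
    -- `y_n^i = α_n ū_n + (1 - α_n) S_i ū_n`
    (hy : ∀ n i, y n i = a n • uu n (kn n) + (1 - a n) • S i (uu n (kn n)))
    -- `i_n` attains `max{‖y_n^i - x_n‖}`, `ȳ_n = y_n^{i_n}`
    (hin : ∀ n i, ‖y n i - x n‖ ≤ ‖y n (inn n) - x n‖)
    -- `C_n = {v : ‖v - ȳ_n‖ ≤ ‖v - z̄_n‖ ≤ ‖v - x_n‖}`
    (hCn : ∀ n, Cn n = {v | ‖v - y n (inn n)‖ ≤ ‖v - z n (ln n)‖ ∧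
      ‖v - z n (ln n)‖ ≤ ‖v - x n‖})
    -- `Q_n = {v : ⟨x_0 - x_n, x_n - v⟩ ≥ 0}`
    (hQn : ∀ n, Qn n = {v | 0 ≤ ⟪x 0 - x n, x n - v⟫})
    -- `x_{n+1} = P_{C_n ∩ Q_n} x_0`
    (hx : ∀ n, IsMetricProj (Cn n ∩ Qn n) (x 0) (x (n + 1)))
    -- a subsequence `x_{φ(m)}` converges weakly to `x̂ ∈ C`
    (xhat : H) (hxhatC : xhat ∈ C) (φ : ℕ → ℕ) (hφ : StrictMono φ)
    (hweak : ∀ w : H,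
      Filter.Tendsto (fun m => ⟪x (φ m), w⟫) Filter.atTop (nhds ⟪xhat, w⟫)) :
    ∀ l, ∀ q ∈ C, 0 ≤ f l xhat q := by
  intro l₀ q hq
  obtain ⟨p, hpF⟩ := hFne
  rw [hF] at hpF
  obtain ⟨hpC, hpEP, hpFix, hpVI⟩ := hpF
  have hrpos : ∀ n, 0 < r n := fun n => lt_of_lt_of_le hd (hr n)
  have hzC : ∀ n l, z n l ∈ C := fun n l => (hz n l).1
  -- resolvent inequality against p
  have hres : ∀ n l, 0 ≤ ⟪p - z n l, z n l - x n⟫ := by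
    intro n l
    have h2 := (hz n l).2 p hpC
    have hmono := hfA2 l (z n l) (hzC n l) p hpC
    have hEP := hpEP l (z n l) (hzC n l)
    have h3 : 0 ≤ (1 / r n) * ⟪p - z n l, z n l - x n⟫ := by linarith
    exact (mul_nonneg_iff_of_pos_left (one_div_pos.mpr (hrpos n))).mp h3
  have hzle : ∀ n l, ‖z n l - p‖ ≤ ‖x n - p‖ := by
    intro n l
    have h := hres n l
    have e := norm_add_sq_real (x n - z n l) (z n l - p)
    rw [sub_add_sub_cancel] at e
    have hc : ⟪x n - z n l, z n l - p⟫ = ⟪p - z n l, z n l - x n⟫ := by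
      rw [show x n - z n l = -(z n l - x n) from by abel,
        show z n l - p = -(p - z n l) from by abel, inner_neg_neg, real_inner_comm]
    refine le_of_sq_le_sq'' (norm_nonneg _) (norm_nonneg _) ?_
    nlinarith [sq_nonneg ‖x n - z n l‖]
  -- projection step contraction
  have huc : ∀ n k, ‖uu n k - p‖ ≤ ‖z n (ln n) - p‖ := by
    intro n k
    set zb := z n (ln n) with hzb
    set u := uu n k with hu'
    have hproj := hu n k
    have huC : u ∈ C := hproj.1
    have hvar := metricProj_inner_le hCcv hproj p hpC
    have hism := hA k zb (hzC n (ln n)) p hpC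
    have hVI := hpVI k u huC
    set w := A k zb - A k p with hw
    have hT : ‖(zb - p) - lam • w‖ ≤ ‖zb - p‖ := by
      refine le_of_sq_le_sq'' (norm_nonneg _) (norm_nonneg _) ?_
      rw [norm_sub_sq_real, real_inner_smul_right, norm_smul, Real.norm_eq_abs,
        abs_of_pos hlam.1, mul_pow]
      rw [real_inner_comm] at hism
      nlinarith [mul_le_mul_of_nonneg_left hism hlam.1.le,
        mul_nonneg (mul_nonneg hlam.1.le (sub_nonneg.mpr hlam.2.le)) (sq_nonneg ‖w‖)]
    have h3 : ⟪u - (zb - lam • A k zb), u - p⟫ ≤ 0 := by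
      have h := hvar
      rwa [show (zb - lam • A k zb) - u = -(u - (zb - lam • A k zb)) from by abel,
        show p - u = -(u - p) from by abel, inner_neg_neg] at h
    have hsplit : u - p = (u - (zb - lam • A k zb)) + ((zb - p) - lam • w) - lam • A k p := by
      rw [hw]; module
    have h4 : ⟪u - p, u - p⟫ = ⟪u - (zb - lam • A k zb), u - p⟫
        + ⟪(zb - p) - lam • w, u - p⟫ - lam * ⟪A k p, u - p⟫ := by
      nth_rewrite 1 [hsplit]
      rw [inner_sub_left, inner_add_left, real_inner_smul_left]
    have h5 := real_inner_le_norm ((zb - p) - lam • w) (u - p)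
    have h6 : 0 ≤ lam * ⟪A k p, u - p⟫ := mul_nonneg hlam.1.le hVI
    have h7 : ⟪u - p, u - p⟫ = ‖u - p‖ ^ 2 := real_inner_self_eq_norm_sq _
    have key : ‖u - p‖ ^ 2 ≤ ‖(zb - p) - lam • w‖ * ‖u - p‖ := by linarith
    rcases eq_or_lt_of_le (norm_nonneg (u - p)) with h0 | h0
    · rw [← h0]; exact norm_nonneg _
    · rw [sq] at key
      exact le_of_mul_le_mul_right
        (key.trans (mul_le_mul_of_nonneg_right hT (norm_nonneg _))) h0
  -- nonexpansive step contraction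
  have hyc : ∀ n i, ‖y n i - p‖ ≤ ‖uu n (kn n) - p‖ := by
    intro n i
    rw [hy n i]
    have huC : uu n (kn n) ∈ C := (hu n (kn n)).1
    have hSnon := hS i (uu n (kn n)) huC p hpC
    rw [hpFix i] at hSnon
    have hsplit : a n • uu n (kn n) + (1 - a n) • S i (uu n (kn n)) - p
        = a n • (uu n (kn n) - p) + (1 - a n) • (S i (uu n (kn n)) - p) := by module
    rw [hsplit]
    have ha0 := (ha n).1
    have ha1 := (ha n).2
    calc ‖a n • (uu n (kn n) - p) + (1 - a n) • (S i (uu n (kn n)) - p)‖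
        ≤ ‖a n • (uu n (kn n) - p)‖ + ‖(1 - a n) • (S i (uu n (kn n)) - p)‖ := norm_add_le _ _
      _ = a n * ‖uu n (kn n) - p‖ + (1 - a n) * ‖S i (uu n (kn n)) - p‖ := by
          rw [norm_smul, norm_smul, Real.norm_eq_abs, Real.norm_eq_abs,
            abs_of_nonneg ha0, abs_of_nonneg (by linarith : (0:ℝ) ≤ 1 - a n)]
      _ ≤ a n * ‖uu n (kn n) - p‖ + (1 - a n) * ‖uu n (kn n) - p‖ := by
          have := mul_le_mul_of_nonneg_left hSnon (by linarith : (0:ℝ) ≤ 1 - a n)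
          linarith
      _ = ‖uu n (kn n) - p‖ := by ring
  -- p belongs to all the C_n and Q_n
  have hpCn : ∀ n, p ∈ Cn n := by
    intro n
    rw [hCn n]
    refine ⟨?_, ?_⟩
    · have h1 := hyc n (inn n)
      have h2 := huc n (kn n)
      rw [norm_sub_rev p (y n (inn n)), norm_sub_rev p (z n (ln n))]
      linarith
    · rw [norm_sub_rev p (z n (ln n)), norm_sub_rev p (x n)]
      exact hzle n (ln n)
  have hCnconv : ∀ n, Convex ℝ (Cn n) := by
    intro n
    have he : Cn n = {v : H | ‖v - y n (inn n)‖ ≤ ‖v - z n (ln n)‖} ∩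
        {v : H | ‖v - z n (ln n)‖ ≤ ‖v - x n‖} := by
      rw [hCn n]; rfl
    rw [he]
    exact (norm_halfspace_convex _ _).inter (norm_halfspace_convex _ _)
  have hQnconv : ∀ n, Convex ℝ (Qn n) := by
    intro n
    have he : Qn n = {v : H | ⟪x 0 - x n, v⟫ ≤ ⟪x 0 - x n, x n⟫} := by
      rw [hQn n]
      ext v
      simp only [Set.mem_setOf_eq, inner_sub_right]
      constructor <;> intro <;> linarith
    rw [he]
    exact inner_halfspace_convex _ _
  have hpQn : ∀ n, p ∈ Qn n := by
    intro n
    induction n with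
    | zero => rw [hQn]; simp
    | succ n ih =>
      have hvar := metricProj_inner_le ((hCnconv n).inter (hQnconv n)) (hx n) p ⟨hpCn n, ih⟩
      rw [hQn]
      have : ⟪x 0 - x (n+1), x (n+1) - p⟫ = -⟪x 0 - x (n+1), p - x (n+1)⟫ := by
        rw [show x (n+1) - p = -(p - x (n+1)) from by abel, inner_neg_right]
      simp only [Set.mem_setOf_eq]
      rw [this]
      linarith
  -- boundedness and monotonicity
  have hbdd : ∀ n, ‖x n - x 0‖ ≤ ‖p - x 0‖ := by
    intro n
    cases n with
    | zero => simp
    | succ n => exact (hx n).2 p ⟨hpCn n, hpQn n⟩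
  have hmono2 : ∀ n, ‖x n - x 0‖ ^ 2 + ‖x (n+1) - x n‖ ^ 2 ≤ ‖x (n+1) - x 0‖ ^ 2 := by
    intro n
    have hQ : x (n+1) ∈ Qn n := (hx n).1.2
    rw [hQn n] at hQ
    have e := norm_add_sq_real (x (n+1) - x n) (x n - x 0)
    rw [sub_add_sub_cancel] at e
    have hc : ⟪x (n+1) - x n, x n - x 0⟫ = ⟪x 0 - x n, x n - x (n+1)⟫ := by
      rw [show x 0 - x n = -(x n - x 0) from by abel,
        show x n - x (n+1) = -(x (n+1) - x n) from by abel, inner_neg_neg, real_inner_comm]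
    simp only [Set.mem_setOf_eq] at hQ
    linarith
  have hmonoc : Monotone (fun n => ‖x n - x 0‖ ^ 2) := by
    refine monotone_nat_of_le_succ fun n => ?_
    have := hmono2 n
    have := sq_nonneg ‖x (n+1) - x n‖
    linarith
  have hbdd2 : BddAbove (Set.range fun n => ‖x n - x 0‖ ^ 2) := by
    refine ⟨‖p - x 0‖ ^ 2, ?_⟩
    rintro t ⟨n, rfl⟩
    exact pow_le_pow_left₀ (norm_nonneg _) (hbdd n) 2
  have hconvc := tendsto_atTop_ciSup hmonoc hbdd2
  have hdiff2 : Tendsto (fun n => ‖x (n+1) - x n‖ ^ 2) atTop (𝓝 0) := by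
    have h1 : Tendsto (fun n => ‖x (n+1) - x 0‖ ^ 2 - ‖x n - x 0‖ ^ 2) atTop
        (𝓝 ((⨆ n, ‖x n - x 0‖ ^ 2) - ⨆ n, ‖x n - x 0‖ ^ 2)) := by
      refine Tendsto.sub ?_ hconvc
      exact hconvc.comp (tendsto_add_atTop_nat 1)
    rw [sub_self] at h1
    exact squeeze_zero (fun n => sq_nonneg _) (fun n => by linarith [hmono2 n]) h1
  have hdiff : Tendsto (fun n => ‖x (n+1) - x n‖) atTop (𝓝 0) := by
    have h2 : Tendsto (fun n => Real.sqrt (‖x (n+1) - x n‖ ^ 2)) atTop (𝓝 (Real.sqrt 0)) :=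
      (Real.continuous_sqrt.tendsto 0).comp hdiff2
    rw [Real.sqrt_zero] at h2
    exact h2.congr fun n => Real.sqrt_sq (norm_nonneg _)
  have hxCn : ∀ n, ‖x (n+1) - z n (ln n)‖ ≤ ‖x (n+1) - x n‖ := by
    intro n
    have h := (hx n).1.1
    rw [hCn n] at h
    exact h.2
  have hzxbar : ∀ n, ‖z n l₀ - x n‖ ≤ 2 * ‖x (n+1) - x n‖ := by
    intro n
    have e : z n (ln n) - x n = (z n (ln n) - x (n+1)) + (x (n+1) - x n) := by abel
    calc ‖z n l₀ - x n‖ ≤ ‖z n (ln n) - x n‖ := hln n l₀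
      _ ≤ ‖z n (ln n) - x (n+1)‖ + ‖x (n+1) - x n‖ := by rw [e]; exact norm_add_le _ _
      _ ≤ 2 * ‖x (n+1) - x n‖ := by
          rw [norm_sub_rev (z n (ln n))]
          linarith [hxCn n]
  have hzx : Tendsto (fun n => ‖z n l₀ - x n‖) atTop (𝓝 0) := by
    refine squeeze_zero (fun n => norm_nonneg _) hzxbar ?_
    have := hdiff.const_mul (2:ℝ)
    simpa using this
  -- the subsequence of z's converges weakly to xhat
  have hXbd : ∀ n, ‖x n‖ ≤ ‖p - x 0‖ + ‖x 0‖ := by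
    intro n
    have e : x n = (x n - x 0) + x 0 := by abel
    calc ‖x n‖ = ‖(x n - x 0) + x 0‖ := by rw [← e]
      _ ≤ ‖x n - x 0‖ + ‖x 0‖ := norm_add_le _ _
      _ ≤ _ := by linarith [hbdd n]
  set ζ : ℕ → H := fun m => z (φ m) l₀ with hζ
  have hζx : Tendsto (fun m => ‖ζ m - x (φ m)‖) atTop (𝓝 0) := hzx.comp hφ.tendsto_atTop
  have hζweak : ∀ u : H, Tendsto (fun m => ⟪ζ m, u⟫) atTop (𝓝 ⟪xhat, u⟫) := by
    intro u
    have h1 : Tendsto (fun m => ⟪ζ m - x (φ m), u⟫) atTop (𝓝 0) := by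
      refine squeeze_zero_norm (fun m => ?_) (by simpa using hζx.mul_const ‖u‖)
      rw [Real.norm_eq_abs]
      exact abs_real_inner_le_norm _ _
    have h2 := (hweak u).add h1
    rw [add_zero] at h2
    refine h2.congr fun m => ?_
    rw [← inner_add_left]
    congr 1
    abel
  -- key step: f l₀ w xhat ≤ 0 for all w ∈ C
  have hkey : ∀ w ∈ C, f l₀ w xhat ≤ 0 := by
    intro w hw
    have hfb : ∀ m, f l₀ w (ζ m) ≤ ‖w - ζ m‖ * ‖ζ m - x (φ m)‖ / d := by
      intro m
      have h1 := (hz (φ m) l₀).2 w hw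
      have h2 := hfA2 l₀ (ζ m) (hzC (φ m) l₀) w hw
      have h4 := real_inner_le_norm (w - ζ m) (ζ m - x (φ m))
      have hrm := hr (φ m)
      have hrp := hrpos (φ m)
      have h3 : f l₀ w (ζ m) ≤ (1 / r (φ m)) * ⟪w - ζ m, ζ m - x (φ m)⟫ := by linarith
      have h5 : (1 / r (φ m)) * ⟪w - ζ m, ζ m - x (φ m)⟫ ≤
          (1 / r (φ m)) * (‖w - ζ m‖ * ‖ζ m - x (φ m)‖) :=
        mul_le_mul_of_nonneg_left h4 (by positivity)
      have h6 : (1 / r (φ m)) * (‖w - ζ m‖ * ‖ζ m - x (φ m)‖) ≤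
          (1 / d) * (‖w - ζ m‖ * ‖ζ m - x (φ m)‖) :=
        mul_le_mul_of_nonneg_right (one_div_le_one_div_of_le hd hrm) (by positivity)
      have h7 : (1 / d) * (‖w - ζ m‖ * ‖ζ m - x (φ m)‖)
          = ‖w - ζ m‖ * ‖ζ m - x (φ m)‖ / d := by ring
      linarith
    have hBev : ∀ᶠ m in atTop, ‖w - ζ m‖ ≤ ‖w‖ + (1 + (‖p - x 0‖ + ‖x 0‖)) := by
      have h1 : ∀ᶠ m in atTop, ‖ζ m - x (φ m)‖ < 1 := hζx.eventually_lt_const one_pos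
      refine h1.mono fun m hm => ?_
      have e : ζ m = (ζ m - x (φ m)) + x (φ m) := by abel
      have h2 : ‖ζ m‖ ≤ ‖ζ m - x (φ m)‖ + ‖x (φ m)‖ := by
        calc ‖ζ m‖ = ‖(ζ m - x (φ m)) + x (φ m)‖ := by rw [← e]
          _ ≤ _ := norm_add_le _ _
      calc ‖w - ζ m‖ ≤ ‖w‖ + ‖ζ m‖ := norm_sub_le _ _
        _ ≤ _ := by linarith [hXbd (φ m)]
    have hRHS : Tendsto (fun m => ‖w - ζ m‖ * ‖ζ m - x (φ m)‖ / d) atTop (𝓝 0) := by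
      have hb : Tendsto (fun m =>
          (‖w‖ + (1 + (‖p - x 0‖ + ‖x 0‖))) * ‖ζ m - x (φ m)‖ / d) atTop (𝓝 0) := by
        have := (hζx.const_mul (‖w‖ + (1 + (‖p - x 0‖ + ‖x 0‖)))).div_const d
        simpa using this
      refine squeeze_zero' (Eventually.of_forall fun m => by positivity) ?_ hb
      refine hBev.mono fun m hm => ?_
      gcongr
    by_contra hpos
    push_neg at hpos
    have hEconv : Convex ℝ {v ∈ C | f l₀ w v ≤ f l₀ w xhat / 2} := (hfA4cv l₀ w hw).convex_le _
    have hEcl : IsClosed {v ∈ C | f l₀ w v ≤ f l₀ w xhat / 2} :=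
      sublevel_closed hCcl (hfA4lsc l₀ w hw) _
    have hmemE : ∀ᶠ m in atTop, ζ m ∈ {v ∈ C | f l₀ w v ≤ f l₀ w xhat / 2} := by
      have h1 : ∀ᶠ m in atTop, ‖w - ζ m‖ * ‖ζ m - x (φ m)‖ / d < f l₀ w xhat / 2 :=
        hRHS.eventually_lt_const (by linarith)
      refine h1.mono fun m hm => ⟨hzC (φ m) l₀, ?_⟩
      linarith [hfb m]
    have hmem := weak_seq_closed hEconv hEcl hmemE hζweak
    have hc := hmem.2
    linarith
  -- conclude via (A1), (A3), (A4)
  have hqt : ∀ t ∈ Set.Ioc (0:ℝ) 1, 0 ≤ f l₀ (t • q + (1-t) • xhat) q := by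
    intro t ht
    have hwC : (t • q + (1-t) • xhat) ∈ C :=
      hCcv hq hxhatC ht.1.le (by linarith [ht.2]) (by ring)
    have h0 : f l₀ (t • q + (1-t) • xhat) (t • q + (1-t) • xhat) = 0 := hfA1 l₀ _ hwC
    have hconv := (hfA4cv l₀ _ hwC).2 hq hxhatC ht.1.le
      (by linarith [ht.2] : (0:ℝ) ≤ 1 - t) (by ring)
    have hneg := hkey _ hwC
    simp only [smul_eq_mul] at hconv
    by_contra hcon
    push_neg at hcon
    nlinarith [mul_nonneg (by linarith [ht.2] : (0:ℝ) ≤ 1 - t) (neg_nonneg.mpr hneg),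
      mul_pos ht.1 (neg_pos.mpr hcon)]
  have hA3 := hfA3 l₀ xhat hxhatC q hq q hq
  refine le_trans ?_ hA3
  rw [Filter.limsup_eq]
  apply Real.sInf_nonneg
  intro b hb
  simp only [Set.mem_setOf_eq] at hb
  have hev : ∀ᶠ t in nhdsWithin (0:ℝ) (Set.Ioi 0), t ∈ Set.Ioc (0:ℝ) 1 :=
    Ioc_mem_nhdsGT_of_mem ⟨le_refl 0, one_pos⟩
  obtain ⟨t, htb, htI⟩ := (hb.and hev).exists
  linarith [hqt t htI]
end

section
/- Let f : C × C → ℝ be a bifunction satisfying (A2), (A3) and (A4), and suppose x̂ ∈ C satisfies f(y, x̂) ≤ 0 for all y ∈ C. If moreover f satisfies (A1), then f(x̂, y) ≥ 0 for all y ∈ C, i.e., x̂ ∈ EP(f). -/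
open scoped RealInnerProductSpace

theorem ep_membership_of_reversed_inequality
    {H : Type*} [NormedAddCommGroup H] [InnerProductSpace ℝ H]
    -- `C` is a nonempty closed convex subset of `H`
    (C : Set H) (hCne : C.Nonempty) (hCcl : IsClosed C) (hCcv : Convex ℝ C)
    -- `f : C × C → ℝ` satisfies (A2), (A3), (A4)
    (f : H → H → ℝ)
    (hA2 : ∀ p ∈ C, ∀ q ∈ C, f p q + f q p ≤ 0)
    (hA3 : ∀ p ∈ C, ∀ q ∈ C, ∀ w ∈ C,
      Filter.limsup (fun t : ℝ => f (t • w + (1 - t) • p) q)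
        (nhdsWithin 0 (Set.Ioi 0)) ≤ f p q)
    (hA4cv : ∀ p ∈ C, ConvexOn ℝ C (f p))
    (hA4lsc : ∀ p ∈ C, LowerSemicontinuousOn (f p) C)
    -- `x̂ ∈ C` satisfies `f(y, x̂) ≤ 0` for all `y ∈ C`
    (xhat : H) (hxhat : xhat ∈ C) (hle : ∀ q ∈ C, f q xhat ≤ 0)
    -- moreover `f` satisfies (A1)
    (hA1 : ∀ p ∈ C, f p p = 0) :
    ∀ q ∈ C, 0 ≤ f xhat q := by
  intro q hq
  -- For t ∈ (0,1], the point x_t = t•q + (1-t)•x̂ lies in C and f x_t q ≥ 0.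
  have key : ∀ t : ℝ, 0 < t → t ≤ 1 → 0 ≤ f (t • q + (1 - t) • xhat) q := by
    intro t ht ht1
    set xt := t • q + (1 - t) • xhat with hxt
    have hxtC : xt ∈ C := hCcv hq hxhat ht.le (by linarith) (by ring)
    have hconv := (hA4cv xt hxtC).2 hq hxhat ht.le
      (by linarith : (0:ℝ) ≤ 1 - t) (by ring)
    rw [← hxt] at hconv
    have h0 : f xt xt = 0 := hA1 xt hxtC
    have h1 : f xt xhat ≤ 0 := hle xt hxtC
    simp only [smul_eq_mul] at hconv
    have h2 : 0 ≤ t * f xt q := by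
      nlinarith [mul_nonneg (by linarith : (0:ℝ) ≤ 1 - t) (neg_nonneg.2 h1)]
    exact nonneg_of_mul_nonneg_right h2 ht
  -- Eventually (for t → 0⁺), 0 ≤ f x_t q.
  have hev : ∀ᶠ t : ℝ in nhdsWithin 0 (Set.Ioi 0),
      0 ≤ f (t • q + (1 - t) • xhat) q := by
    filter_upwards [self_mem_nhdsWithin,
      eventually_nhdsWithin_of_eventually_nhds
        (Filter.Tendsto.eventually_lt_const (by norm_num : (0:ℝ) < 1) Filter.tendsto_id)]
      with t ht ht1
    exact key t ht ht1.le
  -- Hence 0 ≤ limsup, and (A3) concludes.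
  have hlim : 0 ≤ Filter.limsup (fun t : ℝ => f (t • q + (1 - t) • xhat) q)
      (nhdsWithin 0 (Set.Ioi 0)) := by
    rw [Filter.limsup_eq]
    apply Real.sInf_nonneg
    intro a ha
    simp only [Set.mem_setOf_eq] at ha
    rcases ((hev.and ha).exists) with ⟨t, h1, h2⟩
    linarith
  exact hlim.trans (hA3 xhat hxhat q hq q hq)
end
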